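/- If on the event that both confidence intervals hold the UCB algorithm selects a suboptimal arm i at time t, then \mu_i + 2\sqrt{2\log(t)/N_{i,t-1}} \ge \mu^*, which implies N_{i,t-1} \le 8\log(t)/\Delta_i^2. -/

import Mathlib

/-! On the confidence event each index brackets its true mean, so
`μ* ≤ index(i*) ≤ index(i) ≤ μ_i + 2 · radius_i`; the second claim inverts
`Δ_i / 2 ≤ √(2 log t / N_i)` by squaring. -/

theorem le_add_two_mul_of_index_le {α : Type*}
    [CommRing α] [LinearOrder α] [IsStrictOrderedRing α]
    {μi μstar mi mstar ri rstar : α}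
    (hsel : mstar + rstar ≤ mi + ri)
    (hconf_i : |mi - μi| ≤ ri) (hconf_star : |mstar - μstar| ≤ rstar) :
    μstar ≤ μi + 2 * ri := by
  have hi := (abs_le.1 hconf_i).2
  have hstar := (abs_le.1 hconf_star).1
  linarith

theorem le_div_sq_of_le_sqrt_div {Δ n c : ℝ} (hΔ : 0 < Δ) (hn : 0 < n)
    (h : Δ ≤ √(c / n)) : n ≤ c / Δ ^ 2 := by
  have hsq : Δ ^ 2 ≤ c / n := (Real.le_sqrt' hΔ).1 h
  rw [le_div_iff₀ hn] at hsq
  rw [le_div_iff₀ (by positivity)]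
  linarith

theorem ucb_suboptimal_selection_bound_general
    (μi μstar : ℝ) (hgap : 0 < μstar - μi)
    (mi mstar : ℝ)            -- empirical means of arm `i` and of the optimal arm
    (ni nstar : ℝ)            -- numbers of past pulls of the two arms
    (hni : 0 < ni)
    (t : ℝ)
    -- selection of arm `i` at time `t`:
    (hsel : mstar + Real.sqrt (2 * Real.log t / nstar)
      ≤ mi + Real.sqrt (2 * Real.log t / ni))
    -- confidence events for both arms:
    (hconf_i : |mi - μi| ≤ Real.sqrt (2 * Real.log t / ni))
    (hconf_star : |mstar - μstar| ≤ Real.sqrt (2 * Real.log t / nstar)) :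
    μstar ≤ μi + 2 * Real.sqrt (2 * Real.log t / ni)
      ∧ ni ≤ 8 * Real.log t / (μstar - μi) ^ 2 := by
  have hmean := le_add_two_mul_of_index_le hsel hconf_i hconf_star
  refine ⟨hmean, ?_⟩
  calc ni ≤ 2 * Real.log t / ((μstar - μi) / 2) ^ 2 :=
        le_div_sq_of_le_sqrt_div (half_pos hgap) hni (by linarith)
    _ = 8 * Real.log t / (μstar - μi) ^ 2 := by field_simp; ring

/-- If, on the event where both confidence intervals hold, the UCB algorithm selects a
suboptimal arm `i` at time `t`, then `μ_i + 2√(2 log t / N_i) ≥ μ*`, which implies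
`N_i ≤ 8 log t / Δ_i²`. -/
theorem ucb_suboptimal_selection_bound
    (μi μstar : ℝ) (hgap : 0 < μstar - μi)
    (mi mstar : ℝ)            -- empirical means of arm `i` and of the optimal arm
    (ni nstar : ℝ)            -- numbers of past pulls of the two arms
    (hni : 0 < ni) (hnstar : 0 < nstar)
    (t : ℝ) (ht : 1 ≤ t)
    -- selection of arm `i` at time `t`:
    (hsel : mstar + Real.sqrt (2 * Real.log t / nstar)
      ≤ mi + Real.sqrt (2 * Real.log t / ni))
    -- confidence events for both arms:
    (hconf_i : |mi - μi| ≤ Real.sqrt (2 * Real.log t / ni))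
    (hconf_star : |mstar - μstar| ≤ Real.sqrt (2 * Real.log t / nstar)) :
    μstar ≤ μi + 2 * Real.sqrt (2 * Real.log t / ni)
      ∧ ni ≤ 8 * Real.log t / (μstar - μi) ^ 2 :=
  ucb_suboptimal_selection_bound_general μi μstar hgap mi mstar ni nstar hni t hsel hconf_i
    hconf_star
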